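/- Define a*b = ab if a ≲ ab (and undefined otherwise), where a ≲ ab means: for all x ∈ ℤⁿ, 0 < x and 0 < xab imply 0 < xa (lexicographic order). Then for all a, b, c ∈ GL(n,ℤ), (a*b)*c is defined if and only if a*(b*c) is defined; i.e., (a ≲ ab and ab ≲ abc) iff (b ≲ bc and a ≲ abc). -/

import Mathlib

/-!
Put `S g = {x ∈ ℤⁿ | xg > 0}`. Since `g` is invertible and linear, `S g` contains exactly one of
`x, -x` for every `x ≠ 0`, and `a ≲ c` says `S 1 ∩ S c ⊆ S a`. Substituting `x ↦ xa` turns `b ≲ bc`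
into `S a ∩ S abc ⊆ S ab`, so with `A, B, C, D = S 1, S a, S ab, S abc` the claim becomes
`A ∩ C ⊆ B ∧ A ∩ D ⊆ C ↔ B ∩ D ⊆ C ∧ A ∩ D ⊆ B`, which holds for any four such sets: a vector
missing from one of them can be replaced by its negative, which lies in it.
-/

/-- `x > 0` in the standard lexicographic order on `ℤⁿ`. -/
def lexPos {n : ℕ} (x : Fin n → ℤ) : Prop :=
  ∃ i, (∀ j, j < i → x j = 0) ∧ 0 < x i

/-- `a ≲ c` (for `c = ab`): for all `x`, `0 < x` and `0 < xc` imply `0 < xa`. -/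
def Lesim {n : ℕ} (a c : Matrix.GeneralLinearGroup (Fin n) ℤ) : Prop :=
  ∀ x : Fin n → ℤ, lexPos x →
    lexPos (Matrix.vecMul x (c : Matrix (Fin n) (Fin n) ℤ)) →
    lexPos (Matrix.vecMul x (a : Matrix (Fin n) (Fin n) ℤ))

structure IsHalf {V : Type*} [AddGroup V] (X : Set V) : Prop where
  mem_or_neg_mem : ∀ v ≠ 0, v ∈ X ∨ -v ∈ X
  neg_notMem : ∀ v ∈ X, -v ∉ X

namespace IsHalf

variable {V W : Type*} [AddGroup V] [AddGroup W] {X : Set V}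

theorem ne_zero (hX : IsHalf X) {v : V} (hv : v ∈ X) : v ≠ 0 := by
  rintro rfl
  exact hX.neg_notMem 0 hv (by rwa [neg_zero])

theorem neg_mem (hX : IsHalf X) {v : V} (hv : v ≠ 0) (hvX : v ∉ X) : -v ∈ X :=
  (hX.mem_or_neg_mem v hv).resolve_left hvX

theorem mem_of_neg_notMem (hX : IsHalf X) {v : V} (hv : v ≠ 0) (hvX : -v ∉ X) : v ∈ X :=
  (hX.mem_or_neg_mem v hv).resolve_right hvX

theorem preimage {Y : Set W} (hY : IsHalf Y) (f : V →+ W) (hf : Function.Injective f) :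
    IsHalf (f ⁻¹' Y) where
  mem_or_neg_mem v hv := by
    simpa only [Set.mem_preimage, map_neg] using
      hY.mem_or_neg_mem (f v) ((map_ne_zero_iff f hf).mpr hv)
  neg_notMem v hv := by
    simpa only [Set.mem_preimage, map_neg] using hY.neg_notMem (f v) hv

theorem setOf_pos (G : Type*) [AddGroup G] [LinearOrder G] [AddLeftMono G] :
    IsHalf {x : G | 0 < x} where
  mem_or_neg_mem v hv := by
    simp only [Set.mem_ofPred_eq, Left.neg_pos_iff]
    exact hv.lt_or_gt.symm
  neg_notMem v hv := by
    simpa only [Set.mem_ofPred_eq, Left.neg_pos_iff, not_lt] using hv.le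

theorem inter_subset_and_inter_subset_iff {A B C D : Set V} (hA : IsHalf A) (hB : IsHalf B)
    (hC : IsHalf C) (hD : IsHalf D) :
    (A ∩ C ⊆ B ∧ A ∩ D ⊆ C) ↔ (B ∩ D ⊆ C ∧ A ∩ D ⊆ B) := by
  constructor
  · rintro ⟨hACB, hADC⟩
    refine ⟨fun v ⟨hvB, hvD⟩ => ?_, fun v hv => hACB ⟨hv.1, hADC hv⟩⟩
    by_cases hvA : v ∈ A
    · exact hADC ⟨hvA, hvD⟩
    · have hv : v ≠ 0 := hB.ne_zero hvB
      exact hC.mem_of_neg_notMem hv fun hvC =>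
        hB.neg_notMem v hvB (hACB ⟨hA.neg_mem hv hvA, hvC⟩)
  · rintro ⟨hBDC, hADB⟩
    refine ⟨fun v ⟨hvA, hvC⟩ => ?_, fun v hv => hBDC ⟨hADB hv, hv.2⟩⟩
    by_contra hvB
    have hv : v ≠ 0 := hA.ne_zero hvA
    have hvD : v ∈ D := hD.mem_of_neg_notMem hv fun hnD =>
      hC.neg_notMem v hvC (hBDC ⟨hB.neg_mem hv hvB, hnD⟩)
    exact hvB (hADB ⟨hvA, hvD⟩)

end IsHalf

theorem lexPos_iff {n : ℕ} (x : Fin n → ℤ) : lexPos x ↔ 0 < toLex x := by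
  simp only [lexPos, eq_comm (a := x _)]
  rfl

theorem isHalf_setOf_lexPos (n : ℕ) : IsHalf {x : Fin n → ℤ | lexPos x} := by
  rw [show {x : Fin n → ℤ | lexPos x} = toLexAddEquiv _ ⁻¹' {x | 0 < x} from Set.ext lexPos_iff]
  exact (IsHalf.setOf_pos _).preimage (toLexAddEquiv _).toAddMonoidHom (toLexAddEquiv _).injective

namespace Matrix.GeneralLinearGroup

variable {n : ℕ}

def lexPosSet (g : GL (Fin n) ℤ) : Set (Fin n → ℤ) :=
  (· ᵥ* (g : Matrix (Fin n) (Fin n) ℤ)) ⁻¹' {x | lexPos x}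

theorem isHalf_lexPosSet (g : GL (Fin n) ℤ) : IsHalf (lexPosSet g) :=
  (isHalf_setOf_lexPos n).preimage (vecMulLinear (g : Matrix (Fin n) (Fin n) ℤ)).toAddMonoidHom
    (vecMul_injective_of_isUnit g.isUnit)

theorem lexPosSet_mul (a g : GL (Fin n) ℤ) :
    lexPosSet (a * g) = (· ᵥ* (a : Matrix (Fin n) (Fin n) ℤ)) ⁻¹' lexPosSet g := by
  ext x
  simp [lexPosSet, vecMul_vecMul]

theorem lesim_iff_lexPosSet_subset (a b c : GL (Fin n) ℤ) :
    Lesim b c ↔ lexPosSet a ∩ lexPosSet (a * c) ⊆ lexPosSet (a * b) := by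
  have hsurj : Function.Surjective (· ᵥ* (a : Matrix (Fin n) (Fin n) ℤ)) :=
    vecMul_surjective_iff_isUnit.mpr a.isUnit
  calc Lesim b c ↔ lexPosSet 1 ∩ lexPosSet c ⊆ lexPosSet b := by
        simp [Lesim, lexPosSet, Set.subset_def]
    _ ↔ (· ᵥ* (a : Matrix (Fin n) (Fin n) ℤ)) ⁻¹' (lexPosSet 1 ∩ lexPosSet c) ⊆
          (· ᵥ* (a : Matrix (Fin n) (Fin n) ℤ)) ⁻¹' lexPosSet b :=
        (Set.preimage_subset_preimage_iff (by simp [hsurj.range_eq])).symm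
    _ ↔ _ := by rw [Set.preimage_inter, ← lexPosSet_mul, ← lexPosSet_mul, ← lexPosSet_mul, mul_one]

end Matrix.GeneralLinearGroup

open Matrix.GeneralLinearGroup in
/-- `(a*b)*c` is defined iff `a*(b*c)` is:
`(a ≲ ab and ab ≲ abc)` iff `(b ≲ bc and a ≲ abc)`. -/
theorem stmt8 {n : ℕ} (a b c : Matrix.GeneralLinearGroup (Fin n) ℤ) :
    (Lesim a (a * b) ∧ Lesim (a * b) (a * b * c)) ↔
      (Lesim b (b * c) ∧ Lesim a (a * (b * c))) := by
  rw [lesim_iff_lexPosSet_subset a b (b * c)]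
  simp only [lesim_iff_lexPosSet_subset 1, one_mul, ← mul_assoc]
  exact IsHalf.inter_subset_and_inter_subset_iff (isHalf_lexPosSet 1) (isHalf_lexPosSet a)
    (isHalf_lexPosSet _) (isHalf_lexPosSet _)
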